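/- arXiv:1301.4853 — 5 statements merged into one kernel-verified Lean document; each statement's English description precedes it below -/
import Mathlib

section
/- For every ε > 0 there exists a constant C > 0 such that the following holds: for every prime p and all finite nonempty sets A, B ⊆ F_p with 0 ∉ A and 0 ∉ B, there exists G ⊆ A × B with |G| ≥ (1 − ε)·|A|·|B| such that |A −_G B| ≤ C · |A·(B+1)| · |B·(A+1)| · |A/B| / (|A|·|B|). -/
/-! Keep only the pairs `(a, b)` whose ratio `a / b` is popular, i.e. is attained by at least
`θ = ε |A| |B| / |A/B|` pairs of `A × B`; the discarded pairs number at most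
`|A/B| θ = ε |A| |B|`.
For a kept pair `(a, b)` with `a - b = d`, every pair `(x, y) ∈ A × B` with `x / y = a / b` gives
`a (y + 1) - b (x + 1) = d`, and `(x, y) ↦ (a (y + 1), b (x + 1))` is injective. So each
`d ∈ A -_G B` has at least `θ` representations as a difference of `A (B + 1)` and `B (A + 1)`,
whence `θ |A -_G B| ≤ |A (B + 1)| |B (A + 1)|`. -/

open Finset

theorem card_filter_card_fiber_lt_le {α β : Type*} [DecidableEq β] (s : Finset α)
    (f : α → β) {θ : ℝ} (hθ : 0 ≤ θ) :
    (#(s.filter fun x => (#(s.filter fun y => f y = f x) : ℝ) < θ) : ℝ) ≤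
      #(s.image f) * θ := by
  set bad := s.filter fun x => (#(s.filter fun y => f y = f x) : ℝ) < θ
  have hfiber : ∀ q ∈ bad.image f, (#(bad.filter fun x => f x = q) : ℝ) ≤ θ := by
    intro q hq
    obtain ⟨x, hx, rfl⟩ := mem_image.1 hq
    refine le_trans ?_ (mem_filter.1 hx).2.le
    exact_mod_cast card_le_card (filter_subset_filter _ (filter_subset _ _))
  calc (#bad : ℝ) = ∑ q ∈ bad.image f, (#(bad.filter fun x => f x = q) : ℝ) := by
        exact_mod_cast card_eq_sum_card_image f bad
    _ ≤ ∑ _q ∈ bad.image f, θ := sum_le_sum hfiber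
    _ = #(bad.image f) * θ := by rw [sum_const, nsmul_eq_mul]
    _ ≤ #(s.image f) * θ := by
        gcongr
        exact filter_subset _ s

section Field

variable {F : Type*} [Field F]

theorem mul_add_one_sub_mul_add_one_of_div_eq {a b x y : F} (hb : b ≠ 0) (hy : y ≠ 0)
    (h : x / y = a / b) : a * (y + 1) - b * (x + 1) = a - b := by
  rw [div_eq_div_iff hy hb] at h
  linear_combination -h

variable [DecidableEq F]

theorem sum_card_filter_div_eq_le {A B : Finset F} {W : Finset (F × F)} (hA : (0 : F) ∉ A)
    (hB : (0 : F) ∉ B) (hW : W ⊆ A ×ˢ B) (hinj : Set.InjOn (fun w : F × F => w.1 - w.2) W) :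
    ∑ w ∈ W, #((A ×ˢ B).filter fun x => x.1 / x.2 = w.1 / w.2) ≤
      #((A ×ˢ B).image fun x => x.1 * (x.2 + 1)) *
        #((A ×ˢ B).image fun x => x.2 * (x.1 + 1)) := by
  rw [← card_sigma, ← card_product]
  refine card_le_card_of_injOn
    (fun z : (_ : F × F) × (F × F) => (z.1.1 * (z.2.2 + 1), z.1.2 * (z.2.1 + 1))) ?_ ?_
  · rintro ⟨⟨a, b⟩, ⟨x, y⟩⟩ hz
    simp only [coe_sigma, Set.mem_sigma_iff, mem_coe, mem_filter, mem_product] at hz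
    obtain ⟨hab, ⟨hx, hy⟩, -⟩ := hz
    obtain ⟨ha, hb⟩ := mem_product.1 (hW hab)
    exact mem_product.2 ⟨mem_image.2 ⟨(a, y), mem_product.2 ⟨ha, hy⟩, rfl⟩,
      mem_image.2 ⟨(x, b), mem_product.2 ⟨hx, hb⟩, rfl⟩⟩
  · rintro ⟨⟨a, b⟩, ⟨x, y⟩⟩ hz ⟨⟨a', b'⟩, ⟨x', y'⟩⟩ hz' heq
    simp only [coe_sigma, Set.mem_sigma_iff, mem_coe, mem_filter, mem_product] at hz hz'
    obtain ⟨hab, ⟨-, hy⟩, hxy⟩ := hz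
    obtain ⟨hab', ⟨-, hy'⟩, hxy'⟩ := hz'
    obtain ⟨ha, hb⟩ := mem_product.1 (hW hab)
    obtain ⟨-, hb'⟩ := mem_product.1 (hW hab')
    obtain ⟨h1, h2⟩ := Prod.mk.inj heq
    have hdiff : a - b = a' - b' := by
      rw [← mul_add_one_sub_mul_add_one_of_div_eq (ne_of_mem_of_not_mem hb hB)
          (ne_of_mem_of_not_mem hy hB) hxy,
        ← mul_add_one_sub_mul_add_one_of_div_eq (ne_of_mem_of_not_mem hb' hB)
          (ne_of_mem_of_not_mem hy' hB) hxy', h1, h2]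
    obtain ⟨rfl, rfl⟩ := Prod.mk.inj (hinj hab hab' hdiff)
    obtain rfl : y = y' := add_right_cancel (mul_left_cancel₀ (ne_of_mem_of_not_mem ha hA) h1)
    obtain rfl : x = x' := add_right_cancel (mul_left_cancel₀ (ne_of_mem_of_not_mem hb hB) h2)
    rfl

theorem exists_large_subset_card_image_sub_le {ε : ℝ} (hε : 0 < ε) {A B : Finset F}
    (hA : A.Nonempty) (hB : B.Nonempty) (hA0 : (0 : F) ∉ A) (hB0 : (0 : F) ∉ B) :
    ∃ G ⊆ A ×ˢ B, (1 - ε) * (#A : ℝ) * #B ≤ #G ∧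
      (#(G.image fun x => x.1 - x.2) : ℝ) ≤
        1 / ε * #((A ×ˢ B).image fun x => x.1 * (x.2 + 1)) *
          #((A ×ˢ B).image fun x => x.2 * (x.1 + 1)) *
          #((A ×ˢ B).image fun x => x.1 / x.2) / (#A * #B) := by
  set X := (A ×ˢ B).image fun x => x.1 * (x.2 + 1)
  set Y := (A ×ˢ B).image fun x => x.2 * (x.1 + 1)
  set Q := (A ×ˢ B).image fun x => x.1 / x.2
  have hApos : (0 : ℝ) < #A := by exact_mod_cast hA.card_pos
  have hBpos : (0 : ℝ) < #B := by exact_mod_cast hB.card_pos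
  have hQpos : (0 : ℝ) < #Q := by exact_mod_cast ((hA.product hB).image _).card_pos
  set θ : ℝ := ε * #A * #B / #Q
  have hθ : 0 < θ := by positivity
  set G := (A ×ˢ B).filter fun x => θ ≤ #((A ×ˢ B).filter fun y => y.1 / y.2 = x.1 / x.2)
  refine ⟨G, filter_subset _ _, ?_, ?_⟩
  · have hbad := card_filter_card_fiber_lt_le (A ×ˢ B) (fun x => x.1 / x.2) hθ.le
    have hsplit := card_filter_add_card_filter_not (s := A ×ˢ B)
      (fun x => θ ≤ #((A ×ˢ B).filter fun y => y.1 / y.2 = x.1 / x.2))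
    simp only [not_le, card_product] at hsplit
    have hQθ : (#Q : ℝ) * θ = ε * #A * #B := mul_div_cancel₀ _ hQpos.ne'
    have hsplit' := congrArg (Nat.cast : ℕ → ℝ) hsplit
    push_cast at hsplit'
    linarith
  · obtain ⟨W, hWG, hinj, hWD⟩ := exists_subset_injOn_image_eq_of_surjOn (G : Set (F × F))
      (G.image fun x => x.1 - x.2) (by rw [coe_image]; exact Set.surjOn_image _ _)
    replace hWG : W ⊆ G := by exact_mod_cast hWG
    have hsum : (#W : ℝ) * θ ≤ #X * #Y := by
      calc (#W : ℝ) * θ = ∑ _w ∈ W, θ := by rw [sum_const, nsmul_eq_mul]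
        _ ≤ ∑ w ∈ W, (#((A ×ˢ B).filter fun x => x.1 / x.2 = w.1 / w.2) : ℝ) :=
            sum_le_sum fun w hw => (mem_filter.1 (hWG hw)).2
        _ ≤ #X * #Y := by
            exact_mod_cast sum_card_filter_div_eq_le hA0 hB0 (hWG.trans (filter_subset _ _)) hinj
    rw [← hWD, card_image_of_injOn hinj]
    calc (#W : ℝ) ≤ #X * #Y / θ := (le_div_iff₀ hθ).2 hsum
      _ = 1 / ε * #X * #Y * #Q / (#A * #B) := by simp only [θ]; field_simp

end Field

theorem stmt7 :
    ∀ ε : ℝ, 0 < ε → ∃ C : ℝ, 0 < C ∧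
      ∀ (p : ℕ) [Fact p.Prime],
        ∀ A B : Finset (ZMod p), A.Nonempty → B.Nonempty →
          (0 : ZMod p) ∉ A → (0 : ZMod p) ∉ B →
          ∃ G ⊆ A ×ˢ B, (1 - ε) * (A.card : ℝ) * (B.card : ℝ) ≤ (G.card : ℝ) ∧
            ((G.image fun x => x.1 - x.2).card : ℝ) ≤
              C * (((A ×ˢ B).image fun x => x.1 * (x.2 + 1)).card : ℝ) *
                (((A ×ˢ B).image fun x => x.2 * (x.1 + 1)).card : ℝ) *
                (((A ×ˢ B).image fun x => x.1 / x.2).card : ℝ) /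
                ((A.card : ℝ) * (B.card : ℝ)) := by
  intro ε hε
  exact ⟨1 / ε, by positivity, fun _ _ _ _ hA hB hA0 hB0 =>
    exists_large_subset_card_image_sub_le hε hA hB hA0 hB0⟩
end

section
/- Let A, B be finite subsets of an abelian group, G ⊆ A × B, A' ⊆ A, H ⊆ A' × A', and K > 0 a real number. If every pair (a₁, a₂) ∈ H has joint G-degree at least K, then |A' −_H A'| ≤ |A −_G B|² / K. In particular, if every pair of elements of A' has joint G-degree at least K, then |A' − A'| ≤ |A −_G B|² / K. -/
open Finset

/-! Each pair `(a₁, a₂) ∈ H` with common neighbourhood `N` yields `|N|` representations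
`a₁ - a₂ = (a₁ - b) - (a₂ - b)` with both `a₁ - b` and `a₂ - b` in `D = A -_Γ B`, and distinct `b`
give distinct representations. So every element of `A' -_H A'` has at least `K` representations as
a difference of two elements of `D`, and there are only `|D|²` such pairs in total. -/

theorem Finset.card_mul_le_card_of_le_card_fiber {α β : Type*} [DecidableEq β] {f : α → β}
    (s : Finset α) (t : Finset β) (n : ℕ) (hn : ∀ b ∈ t, n ≤ #{a ∈ s | f a = b}) :
    n * #t ≤ #s :=
  calc n * #t = ∑ _ ∈ t, n := by rw [sum_const, smul_eq_mul, mul_comm]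
    _ ≤ ∑ b ∈ t, #{a ∈ s | f a = b} := sum_le_sum hn
    _ = #{a ∈ s | f a ∈ t} := sum_card_fiberwise_eq_card_filter s t f
    _ ≤ #s := card_filter_le s _

section PartialDifference

variable {G : Type*} [AddCommGroup G] [DecidableEq G]

theorem card_inter_filter_le_card_filter_sub_eq (B : Finset G) (Γ : Finset (G × G)) (a₁ a₂ : G) :
    #((B.filter fun b => (a₁, b) ∈ Γ) ∩ (B.filter fun b => (a₂, b) ∈ Γ)) ≤
      #{p ∈ (Γ.image fun x => x.1 - x.2) ×ˢ (Γ.image fun x => x.1 - x.2) |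
        p.1 - p.2 = a₁ - a₂} := by
  refine card_le_card_of_injOn (fun b => (a₁ - b, a₂ - b)) ?_ ?_
  · intro b hb
    simp only [coe_inter, coe_filter, Set.mem_inter_iff, Set.mem_ofPred_eq] at hb
    simp only [coe_filter, mem_product, mem_image, Set.mem_ofPred_eq, sub_sub_sub_cancel_right,
      and_true]
    exact ⟨⟨_, hb.1.2, rfl⟩, ⟨_, hb.2.2, rfl⟩⟩
  · intro b₁ _ b₂ _ h
    simpa using congrArg Prod.fst h

theorem card_image_sub_le_sq_card_image_sub_div (B : Finset G) (Γ H : Finset (G × G)) {K : ℝ}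
    (hK : 0 < K)
    (h : ∀ x ∈ H,
        K ≤ (((B.filter fun b => (x.1, b) ∈ Γ) ∩ (B.filter fun b => (x.2, b) ∈ Γ)).card : ℝ)) :
    ((H.image fun x => x.1 - x.2).card : ℝ) ≤
      ((Γ.image fun x => x.1 - x.2).card : ℝ) ^ 2 / K := by
  set D := Γ.image fun x => x.1 - x.2
  set E := H.image fun x => x.1 - x.2
  have hfiber : ∀ d ∈ E, ⌈K⌉₊ ≤ #{p ∈ D ×ˢ D | p.1 - p.2 = d} := by
    intro d hd
    obtain ⟨x, hx, rfl⟩ := mem_image.1 hd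
    exact Nat.ceil_le.2 <| (h x hx).trans <| by
      exact_mod_cast card_inter_filter_le_card_filter_sub_eq B Γ x.1 x.2
  have hcount := card_mul_le_card_of_le_card_fiber (D ×ˢ D) E _ hfiber
  rw [card_product] at hcount
  rw [le_div_iff₀ hK, sq]
  calc (#E : ℝ) * K ≤ ⌈K⌉₊ * #E := by
        rw [mul_comm]; exact mul_le_mul_of_nonneg_right (Nat.le_ceil K) (Nat.cast_nonneg _)
    _ ≤ #D * #D := by exact_mod_cast hcount

end PartialDifference

theorem stmt12_general (G : Type*) [AddCommGroup G] [DecidableEq G]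
    (B : Finset G) (Γ : Finset (G × G))
    (A' : Finset G) (H : Finset (G × G))
    (K : ℝ) (hK : 0 < K) :
    ((∀ x ∈ H,
        K ≤ (((B.filter fun b => (x.1, b) ∈ Γ) ∩ (B.filter fun b => (x.2, b) ∈ Γ)).card : ℝ)) →
      ((H.image fun x => x.1 - x.2).card : ℝ) ≤
        ((Γ.image fun x => x.1 - x.2).card : ℝ) ^ 2 / K) ∧
    ((∀ a₁ ∈ A', ∀ a₂ ∈ A',
        K ≤ (((B.filter fun b => (a₁, b) ∈ Γ) ∩ (B.filter fun b => (a₂, b) ∈ Γ)).card : ℝ)) →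
      (((A' ×ˢ A').image fun x => x.1 - x.2).card : ℝ) ≤
        ((Γ.image fun x => x.1 - x.2).card : ℝ) ^ 2 / K) :=
  ⟨card_image_sub_le_sq_card_image_sub_div B Γ H hK,
    fun h => card_image_sub_le_sq_card_image_sub_div B Γ (A' ×ˢ A') hK
      fun x hx => h x.1 (mem_product.1 hx).1 x.2 (mem_product.1 hx).2⟩

theorem stmt12 (G : Type*) [AddCommGroup G] [DecidableEq G]
    (A B : Finset G) (Γ : Finset (G × G)) (hΓ : Γ ⊆ A ×ˢ B)
    (A' : Finset G) (hA' : A' ⊆ A) (H : Finset (G × G)) (hH : H ⊆ A' ×ˢ A')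
    (K : ℝ) (hK : 0 < K) :
    ((∀ x ∈ H,
        K ≤ (((B.filter fun b => (x.1, b) ∈ Γ) ∩ (B.filter fun b => (x.2, b) ∈ Γ)).card : ℝ)) →
      ((H.image fun x => x.1 - x.2).card : ℝ) ≤
        ((Γ.image fun x => x.1 - x.2).card : ℝ) ^ 2 / K) ∧
    ((∀ a₁ ∈ A', ∀ a₂ ∈ A',
        K ≤ (((B.filter fun b => (a₁, b) ∈ Γ) ∩ (B.filter fun b => (a₂, b) ∈ Γ)).card : ℝ)) →
      (((A' ×ˢ A').image fun x => x.1 - x.2).card : ℝ) ≤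
        ((Γ.image fun x => x.1 - x.2).card : ℝ) ^ 2 / K) :=
  stmt12_general G B Γ A' H K hK
end

section
/- There exist absolute constants c > 0 and C > 0 such that for all finite nonempty sets A, B in an abelian group and every nonempty G ⊆ A × B, there exists a subset A' ⊆ A with |A'| ≥ c·|G|/|B| and |A' − A'| ≤ C · |A|⁴ · |B|³ · |A −_G B|⁴ / |G|⁵. -/
/-!
Dependent random choice in the bipartite graph `Γ ⊆ A × B`. Call `x, y ∈ A` popular when they have
at least `τ = 3|Γ|² / (32|A|²|B|)` common neighbours. By Cauchy–Schwarz some `b ∈ B` has a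
neighbourhood `U` with `|U| ≥ |Γ| / (2|B|)` in which at most `3/16` of the pairs are unpopular;
discarding the points of `U` lying in many unpopular pairs leaves `A'` with `|A'| ≥ |U| / 2`, any two
points of which have `|U| / 4` popular common neighbours `z`, hence `≥ |U| τ² / 4` paths
`x – b – z – b' – y`. Each such path writes `x - y` as an alternating sum of four elements of
`A −_Γ B`, injectively, so `|A' − A'| · |U| τ² / 4 ≤ |A −_Γ B|⁴`.
-/

open Finset

section BipartiteGraph

variable {α β : Type*}

/-- The constant `3 / 32` makes the unpopular pairs cost at most half of the Cauchy–Schwarz bound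
`|Γ|² / |B| ≤ ∑ b, |N(b)|²` in `exists_mem_card_nbhd_large_few_unpopular`. -/
noncomputable def popularityThreshold (Γ : Finset (α × β)) (A : Finset α) (B : Finset β) : ℝ :=
  3 * #Γ ^ 2 / (32 * #A ^ 2 * #B)

lemma popularityThreshold_nonneg (Γ : Finset (α × β)) (A : Finset α) (B : Finset β) :
    0 ≤ popularityThreshold Γ A B := by
  unfold popularityThreshold; positivity

variable [DecidableEq α] [DecidableEq β]

lemma exists_half_subset_forall_card_common_not_rel (U : Finset α) (R : α → α → Prop)
    [∀ x y, Decidable (R x y)] {ε : ℝ} (hε : 0 < ε)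
    (hR : (#{p ∈ U ×ˢ U | R p.1 p.2} : ℝ) ≤ ε * #U ^ 2) :
    ∃ A' ⊆ U, (#U : ℝ) / 2 ≤ #A' ∧
      ∀ x ∈ A', ∀ y ∈ A', (1 - 4 * ε) * #U ≤ #{z ∈ U | ¬R x z ∧ ¬R y z} := by
  set deg : α → ℕ := fun x => #{y ∈ U | R x y}
  have hdeg : ∑ x ∈ U, (deg x : ℝ) ≤ ε * #U ^ 2 := by
    have : #{p ∈ U ×ˢ U | R p.1 p.2} = ∑ x ∈ U, deg x := by
      simp only [deg, card_filter, sum_product]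
    exact_mod_cast this ▸ hR
  refine ⟨{x ∈ U | (deg x : ℝ) ≤ 2 * ε * #U}, filter_subset _ _, ?_, ?_⟩
  · set V := {x ∈ U | ¬(deg x : ℝ) ≤ 2 * ε * #U}
    have hV : (#V : ℝ) * (2 * ε * #U) ≤ ε * #U ^ 2 :=
      calc (#V : ℝ) * (2 * ε * #U) = ∑ _x ∈ V, 2 * ε * #U := by simp
        _ ≤ ∑ x ∈ V, (deg x : ℝ) := sum_le_sum fun x hx => (not_le.mp (mem_filter.mp hx).2).le
        _ ≤ ∑ x ∈ U, (deg x : ℝ) :=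
          sum_le_sum_of_subset_of_nonneg (filter_subset _ _) fun _ _ _ => by positivity
        _ ≤ ε * #U ^ 2 := hdeg
    have hsplit := card_filter_add_card_filter_not (s := U) fun x => (deg x : ℝ) ≤ 2 * ε * #U
    rcases (#U).eq_zero_or_pos with hU | hU
    · simp [hU]
    · have hVU : (#V : ℝ) ≤ #U / 2 := by
        have : (0 : ℝ) < 2 * ε * #U := by positivity
        rw [le_div_iff₀ two_pos]
        nlinarith
      have : (#U : ℝ) = #{x ∈ U | (deg x : ℝ) ≤ 2 * ε * #U} + #V := by exact_mod_cast hsplit.symm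
      linarith
  · intro x hx y hy
    have hxy : #{z ∈ U | R x z ∨ R y z} ≤ deg x + deg y := by
      rw [filter_or]; exact card_union_le _ _
    have hsplit : #{z ∈ U | ¬R x z ∧ ¬R y z} + #{z ∈ U | R x z ∨ R y z} = #U := by
      rw [← card_filter_add_card_filter_not (s := U) fun z => ¬R x z ∧ ¬R y z]
      congr 2; ext z; simp only [mem_filter]; tauto
    have hx' := (mem_filter.mp hx).2
    have hy' := (mem_filter.mp hy).2
    have : (#U : ℝ) = #{z ∈ U | ¬R x z ∧ ¬R y z} + #{z ∈ U | R x z ∨ R y z} := by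
      exact_mod_cast hsplit.symm
    have : (#{z ∈ U | R x z ∨ R y z} : ℝ) ≤ deg x + deg y := by exact_mod_cast hxy
    linarith

def codegree (Γ : Finset (α × β)) (B : Finset β) (x y : α) : ℕ :=
  #{b ∈ B | (x, b) ∈ Γ ∧ (y, b) ∈ Γ}

def nbhd (Γ : Finset (α × β)) (A : Finset α) (b : β) : Finset α :=
  {x ∈ A | (x, b) ∈ Γ}

variable {Γ : Finset (α × β)} {A : Finset α} {B : Finset β}

lemma codegree_comm (Γ : Finset (α × β)) (B : Finset β) (x y : α) :
    codegree Γ B x y = codegree Γ B y x := by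
  simp only [codegree, and_comm]

lemma sum_card_nbhd (hΓ : Γ ⊆ A ×ˢ B) : ∑ b ∈ B, #(nbhd Γ A b) = #Γ := by
  calc ∑ b ∈ B, #(nbhd Γ A b) = #{p ∈ A ×ˢ B | p ∈ Γ} := by
        rw [card_filter, sum_product_right]
        simp only [nbhd, card_filter]
    _ = #Γ := by rw [filter_mem_eq_inter, inter_eq_right.mpr hΓ]

lemma sum_card_filter_nbhd_product (P : α → α → Prop) [∀ x y, Decidable (P x y)] :
    ∑ b ∈ B, #{p ∈ nbhd Γ A b ×ˢ nbhd Γ A b | P p.1 p.2} =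
      ∑ p ∈ A ×ˢ A with P p.1 p.2, codegree Γ B p.1 p.2 := by
  calc ∑ b ∈ B, #{p ∈ nbhd Γ A b ×ˢ nbhd Γ A b | P p.1 p.2}
      = ∑ b ∈ B, #{p ∈ A ×ˢ A | P p.1 p.2 ∧ (p.1, b) ∈ Γ ∧ (p.2, b) ∈ Γ} := by
        refine sum_congr rfl fun b _ => congrArg card ?_
        ext p; simp only [nbhd, mem_filter, mem_product]; tauto
    _ = ∑ p ∈ A ×ˢ A with P p.1 p.2, codegree Γ B p.1 p.2 := by
        simp only [card_filter, codegree, sum_filter]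
        rw [sum_comm]
        refine sum_congr rfl fun p _ => ?_
        split_ifs with h <;> simp [h]

lemma sum_card_unpopular_le {τ : ℝ} (hτ : 0 ≤ τ) :
    ((∑ b ∈ B, #{p ∈ nbhd Γ A b ×ˢ nbhd Γ A b | (codegree Γ B p.1 p.2 : ℝ) < τ} : ℕ) : ℝ) ≤
      #A ^ 2 * τ := by
  rw [sum_card_filter_nbhd_product fun x y => (codegree Γ B x y : ℝ) < τ, Nat.cast_sum]
  calc ∑ p ∈ A ×ˢ A with (codegree Γ B p.1 p.2 : ℝ) < τ, (codegree Γ B p.1 p.2 : ℝ)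
      ≤ ∑ p ∈ A ×ˢ A with (codegree Γ B p.1 p.2 : ℝ) < τ, τ :=
        sum_le_sum fun p hp => (mem_filter.mp hp).2.le
    _ ≤ ∑ p ∈ A ×ˢ A, τ := sum_le_sum_of_subset_of_nonneg (filter_subset _ _) fun _ _ _ => hτ
    _ = #A ^ 2 * τ := by simp [card_product, sq]

lemma exists_mem_card_nbhd_large_few_unpopular (hΓ : Γ ⊆ A ×ˢ B) (hB : B.Nonempty) :
    ∃ b ∈ B, (#Γ : ℝ) ^ 2 ≤ 2 * #B ^ 2 * #(nbhd Γ A b) ^ 2 ∧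
      (#{p ∈ nbhd Γ A b ×ˢ nbhd Γ A b |
          (codegree Γ B p.1 p.2 : ℝ) < popularityThreshold Γ A B} : ℝ) ≤
        3 / 16 * #(nbhd Γ A b) ^ 2 := by
  set τ := popularityThreshold Γ A B
  set N : β → ℝ := fun b => #(nbhd Γ A b)
  set bad : β → ℝ := fun b =>
    #{p ∈ nbhd Γ A b ×ˢ nbhd Γ A b | (codegree Γ B p.1 p.2 : ℝ) < τ}
  obtain ⟨b, hb, hmax⟩ := B.exists_max_image (fun b => N b ^ 2 - 16 / 3 * bad b) hB
  have hCS : (#Γ : ℝ) ^ 2 ≤ #B * ∑ b ∈ B, N b ^ 2 := by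
    rw [← sum_card_nbhd hΓ, Nat.cast_sum]
    exact sq_sum_le_card_mul_sum_sq
  have hbad : ∑ b ∈ B, bad b ≤ 3 * #Γ ^ 2 / (32 * #B) := by
    have hsum : ∑ b ∈ B, bad b ≤ #A ^ 2 * τ := by
      simpa only [bad, Nat.cast_sum] using sum_card_unpopular_le (popularityThreshold_nonneg Γ A B)
    refine hsum.trans ?_
    rcases eq_or_ne (#A : ℝ) 0 with hA | hA
    · rw [hA, zero_pow two_ne_zero, zero_mul]; positivity
    · have hB' : (#B : ℝ) ≠ 0 := by simpa using hB.ne_empty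
      refine le_of_eq ?_
      simp only [τ, popularityThreshold]
      field_simp
  have havg : ∑ b ∈ B, (N b ^ 2 - 16 / 3 * bad b) ≤ #B * (N b ^ 2 - 16 / 3 * bad b) := by
    simpa using sum_le_card_nsmul B _ _ hmax
  rw [sum_sub_distrib, ← mul_sum] at havg
  have hBpos : (0 : ℝ) < #B := by exact_mod_cast hB.card_pos
  have hbad' : 32 * #B * ∑ b ∈ B, bad b ≤ 3 * #Γ ^ 2 := by
    rwa [le_div_iff₀ (by positivity), mul_comm] at hbad
  have hkey : (#Γ : ℝ) ^ 2 ≤ 2 * #B ^ 2 * (N b ^ 2 - 16 / 3 * bad b) := by nlinarith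
  have hgain : 0 ≤ N b ^ 2 - 16 / 3 * bad b :=
    nonneg_of_mul_nonneg_right (hkey.trans' (sq_nonneg _)) (by positivity)
  have hbad0 : 0 ≤ bad b := by positivity
  exact ⟨b, hb, by nlinarith, show bad b ≤ 3 / 16 * N b ^ 2 by linarith⟩

theorem exists_large_subset_forall_many_paths (hΓ : Γ ⊆ A ×ˢ B) (hB : B.Nonempty) :
    ∃ A' ⊆ A, ∃ u : ℝ, #Γ ≤ 2 * #B * u ∧ u / 2 ≤ #A' ∧
      ∀ x ∈ A', ∀ y ∈ A', u / 4 * popularityThreshold Γ A B ^ 2 ≤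
        ∑ z ∈ A, (codegree Γ B x z * codegree Γ B z y : ℝ) := by
  set τ := popularityThreshold Γ A B
  obtain ⟨b, -, hlarge, hfew⟩ := exists_mem_card_nbhd_large_few_unpopular hΓ hB (A := A)
  set U := nbhd Γ A b
  obtain ⟨A', hA'U, hA', hcommon⟩ := exists_half_subset_forall_card_common_not_rel U
    (fun x y => (codegree Γ B x y : ℝ) < τ) (by norm_num : (0 : ℝ) < 3 / 16) hfew
  have hUA : U ⊆ A := filter_subset _ _
  refine ⟨A', hA'U.trans hUA, #U, ?_, hA', fun x hx y hy => ?_⟩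
  · nlinarith [sq_nonneg ((#Γ : ℝ) - 2 * #B * #U), (by positivity : (0 : ℝ) ≤ #Γ),
      (by positivity : (0 : ℝ) ≤ #B * #U)]
  set Z := {z ∈ U | ¬(codegree Γ B x z : ℝ) < τ ∧ ¬(codegree Γ B y z : ℝ) < τ}
  have hpath : ∀ z ∈ Z, τ ^ 2 ≤ (codegree Γ B x z * codegree Γ B z y : ℝ) := by
    intro z hz
    obtain ⟨-, hxz, hyz⟩ := mem_filter.mp hz
    rw [codegree_comm Γ B z y, sq]
    exact mul_le_mul (not_lt.mp hxz) (not_lt.mp hyz) (popularityThreshold_nonneg Γ A B)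
      (Nat.cast_nonneg _)
  calc (#U : ℝ) / 4 * τ ^ 2 ≤ #Z * τ ^ 2 := by
        have := hcommon x hx y hy
        exact mul_le_mul_of_nonneg_right (by linarith) (sq_nonneg τ)
    _ ≤ ∑ z ∈ Z, (codegree Γ B x z * codegree Γ B z y : ℝ) := by
        simpa using card_nsmul_le_sum Z _ _ hpath
    _ ≤ ∑ z ∈ A, (codegree Γ B x z * codegree Γ B z y : ℝ) :=
        sum_le_sum_of_subset_of_nonneg ((filter_subset _ _).trans hUA)
          fun _ _ _ => by positivity

end BipartiteGraph

lemma card_mul_le_card_of_forall_le_card_fiber {ι κ : Type*} [DecidableEq κ] (s : Finset ι)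
    (t : Finset κ) (f : ι → κ) {m : ℝ} (h : ∀ v ∈ t, m ≤ #{i ∈ s | f i = v}) :
    #t * m ≤ #s :=
  calc #t * m = ∑ _v ∈ t, m := by simp
    _ ≤ ∑ v ∈ t, (#{i ∈ s | f i = v} : ℝ) := sum_le_sum h
    _ ≤ #s := by
        rw [← Nat.cast_sum, sum_card_fiberwise_eq_card_filter]
        exact_mod_cast card_filter_le _ _

section Additive

variable {G : Type*} [AddCommGroup G] [DecidableEq G]

/-- Each path `x – b – z – b' – y` in `Γ` writes `x - y` as `(x - b) - (z - b) + (z - b') - (y - b')`,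
and the path can be read back from the four differences. -/
lemma sum_codegree_mul_le_card_repr {Γ : Finset (G × G)} {S : Finset G}
    (hS : ∀ p ∈ Γ, p.1 - p.2 ∈ S) (B Z : Finset G) (x y : G) :
    ∑ z ∈ Z, codegree Γ B x z * codegree Γ B z y ≤
      #{q ∈ S ×ˢ S ×ˢ S ×ˢ S | q.1 - q.2.1 + q.2.2.1 - q.2.2.2 = x - y} := by
  let paths := Z.sigma fun z =>
    {b ∈ B | (x, b) ∈ Γ ∧ (z, b) ∈ Γ} ×ˢ {b ∈ B | (z, b) ∈ Γ ∧ (y, b) ∈ Γ}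
  have hpaths : #paths = ∑ z ∈ Z, codegree Γ B x z * codegree Γ B z y := by
    simp only [paths, card_sigma, card_product, codegree]
  rw [← hpaths]
  refine card_le_card_of_injOn (fun p => (x - p.2.1, p.1 - p.2.1, p.1 - p.2.2, y - p.2.2)) ?_ ?_
  · rintro ⟨z, b, b'⟩ hp
    simp only [paths, coe_sigma, Set.mem_sigma_iff, mem_coe, mem_product, mem_filter] at hp
    obtain ⟨-, ⟨-, hxb, hzb⟩, -, hzb', hyb'⟩ := hp
    simp only [coe_filter, Set.mem_ofPred_eq, mem_product]
    exact ⟨⟨hS _ hxb, hS _ hzb, hS _ hzb', hS _ hyb'⟩, by abel⟩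
  · rintro ⟨z, b, b'⟩ - ⟨z', c, c'⟩ - h
    simp only [Prod.mk.injEq, sub_right_inj] at h
    obtain ⟨rfl, hz, -, rfl⟩ := h
    rw [sub_left_inj] at hz
    subst hz
    rfl

lemma card_sub_mul_le_card_pow_four {Γ : Finset (G × G)} {S : Finset G}
    (hS : ∀ p ∈ Γ, p.1 - p.2 ∈ S) (B Z A' : Finset G) {m : ℝ}
    (h : ∀ x ∈ A', ∀ y ∈ A', m ≤ ∑ z ∈ Z, (codegree Γ B x z * codegree Γ B z y : ℝ)) :
    #((A' ×ˢ A').image fun p => p.1 - p.2) * m ≤ #S ^ 4 := by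
  have hrepr : ∀ v ∈ (A' ×ˢ A').image (fun p => p.1 - p.2),
      m ≤ #{q ∈ S ×ˢ S ×ˢ S ×ˢ S | q.1 - q.2.1 + q.2.2.1 - q.2.2.2 = v} := by
    simp only [mem_image, mem_product]
    rintro _ ⟨⟨x, y⟩, ⟨hx, hy⟩, rfl⟩
    exact (h x hx y hy).trans (by exact_mod_cast sum_codegree_mul_le_card_repr hS B Z x y)
  have := card_mul_le_card_of_forall_le_card_fiber _ _ _ hrepr
  rwa [card_product, card_product, card_product, Nat.cast_mul, Nat.cast_mul, Nat.cast_mul,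
    ← pow_two, ← pow_succ', ← pow_succ'] at this

end Additive

theorem stmt13 :
    ∃ c C : ℝ, 0 < c ∧ 0 < C ∧
      ∀ (G : Type) [AddCommGroup G] [DecidableEq G],
        ∀ A B : Finset G, A.Nonempty → B.Nonempty →
          ∀ Γ : Finset (G × G), Γ ⊆ A ×ˢ B → Γ.Nonempty →
            ∃ A' ⊆ A, c * (Γ.card : ℝ) / (B.card : ℝ) ≤ (A'.card : ℝ) ∧
              (((A' ×ˢ A').image fun x => x.1 - x.2).card : ℝ) ≤
                C * (A.card : ℝ) ^ 4 * (B.card : ℝ) ^ 3 *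
                  ((Γ.image fun x => x.1 - x.2).card : ℝ) ^ 4 / (Γ.card : ℝ) ^ 5 := by
  refine ⟨1 / 4, 1024, by norm_num, by norm_num, ?_⟩
  intro G _ _ A B hA hB Γ hΓ hΓne
  obtain ⟨A', hA'A, u, hΓu, hA'u, hpaths⟩ := exists_large_subset_forall_many_paths hΓ hB
  have hcount := card_sub_mul_le_card_pow_four (fun p hp => mem_image_of_mem _ hp) B A A' hpaths
  set T := (A' ×ˢ A').image fun p => p.1 - p.2
  set S := Γ.image fun p => p.1 - p.2
  have hApos : (0 : ℝ) < #A := by exact_mod_cast hA.card_pos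
  have hBpos : (0 : ℝ) < #B := by exact_mod_cast hB.card_pos
  have hΓpos : (0 : ℝ) < #Γ := by exact_mod_cast hΓne.card_pos
  have hTu : #T * u * (9 * #Γ ^ 4) ≤ 4096 * #A ^ 4 * #B ^ 2 * #S ^ 4 := by
    have hτ : popularityThreshold Γ A B ^ 2 * (1024 * #A ^ 4 * #B ^ 2) = 9 * #Γ ^ 4 := by
      unfold popularityThreshold; field_simp; ring
    rw [← hτ]
    nlinarith [mul_le_mul_of_nonneg_right hcount (by positivity : (0 : ℝ) ≤ 4096 * #A ^ 4 * #B ^ 2)]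
  refine ⟨A', hA'A, by rw [div_le_iff₀ hBpos]; nlinarith, ?_⟩
  rw [le_div_iff₀ (by positivity)]
  calc (#T : ℝ) * #Γ ^ 5 = #T * #Γ ^ 4 * #Γ := by ring
    _ ≤ #T * #Γ ^ 4 * (2 * #B * u) := by gcongr
    _ = 2 * #B / 9 * (#T * u * (9 * #Γ ^ 4)) := by ring
    _ ≤ 2 * #B / 9 * (4096 * #A ^ 4 * #B ^ 2 * #S ^ 4) := by gcongr
    _ ≤ 1024 * #A ^ 4 * #B ^ 3 * #S ^ 4 := by
      nlinarith [(by positivity : (0 : ℝ) ≤ #A ^ 4 * #B ^ 3 * #S ^ 4)]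
end

section
/- For every ε with 0 < ε < 1/4 there exists a constant C > 0 such that the following holds: for all finite nonempty sets A, B in an abelian group and every G ⊆ A × B with |G| ≥ (1 − ε)·|A|·|B|, there exists a subset A' ⊆ A with |A'| ≥ (1 − 2√ε)·|A| and a finite set T of group elements with |T| ≤ C·|A −_G B|/|B| such that A' ⊆ ⋃_{x ∈ T} (x + B); moreover there also exists a subset A'' ⊆ A with |A''| ≥ (1 − 2√ε)·|A| and a finite set T' with |T'| ≤ C·|A −_G B|/|B| such that A'' ⊆ ⋃_{x ∈ T'} (x + (−B)). -/
open scoped Pointwise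
open Finset

section aux

variable {G : Type*} [DecidableEq G]

private lemma sum_indicator_of_subset (Y Z : Finset G) (hZ : Z ⊆ Y) :
    (∑ x ∈ Y, if x ∈ Z then 1 else 0) = Z.card := by
  rw [Finset.sum_ite_mem, Finset.inter_eq_right.mpr hZ, Finset.card_eq_sum_ones]

private lemma sum_count (U : Finset G) (S : G → Finset G) (Y : Finset G)
    (hS : ∀ a ∈ U, S a ⊆ Y) :
    ∑ x ∈ Y, (U.filter fun a => x ∈ S a).card = ∑ a ∈ U, (S a).card := by
  simp only [Finset.card_filter]
  rw [Finset.sum_comm]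
  exact Finset.sum_congr rfl fun a ha => sum_indicator_of_subset _ _ (hS a ha)

private lemma sum_count_sq (U : Finset G) (S : G → Finset G) (Y : Finset G)
    (hS : ∀ a ∈ U, S a ⊆ Y) :
    ∑ x ∈ Y, ((U.filter fun a => x ∈ S a).card) ^ 2
      = ∑ a ∈ U, ∑ a' ∈ U, ((S a) ∩ (S a')).card := by
  have h1 : ∀ x : G, ((U.filter fun a => x ∈ S a).card) ^ 2
      = ∑ a ∈ U, ∑ a' ∈ U, (if x ∈ S a ∩ S a' then 1 else 0) := by
    intro x
    rw [Finset.card_filter, sq, Finset.sum_mul_sum]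
    refine Finset.sum_congr rfl fun a _ => Finset.sum_congr rfl fun a' _ => ?_
    by_cases h : x ∈ S a <;> by_cases h' : x ∈ S a' <;>
      simp [h, h', Finset.mem_inter]
  simp only [h1]
  rw [Finset.sum_comm]
  refine Finset.sum_congr rfl fun a ha => ?_
  rw [Finset.sum_comm]
  exact Finset.sum_congr rfl fun a' _ => sum_indicator_of_subset _ _
    ((Finset.inter_subset_left).trans (hS a ha))

private lemma greedy_cover (S : G → Finset G) (ρ : ℝ) (hρ1 : ρ ≤ 1) :
    ∀ (n : ℕ) (U : Finset G),
      (∀ U' ⊆ U, U'.Nonempty → ∃ x : G,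
        ρ * U'.card ≤ ((U'.filter fun a => x ∈ S a).card : ℝ)) →
      ∃ T : Finset G, T.card ≤ n ∧
        (((U.filter fun a => ∀ x ∈ T, x ∉ S a).card : ℝ) ≤ (1 - ρ) ^ n * U.card) := by
  intro n
  induction n with
  | zero =>
    intro U h
    refine ⟨∅, le_rfl, ?_⟩
    simp
  | succ n ih =>
    intro U h
    rcases U.eq_empty_or_nonempty with rfl | hU
    · exact ⟨∅, Nat.zero_le _, by simp⟩
    obtain ⟨x, hx⟩ := h U subset_rfl hU
    set U₂ := U.filter fun a => x ∉ S a with hU₂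
    obtain ⟨T₂, hT₂card, hT₂⟩ := ih U₂ (fun U' hU' => h U' (hU'.trans (filter_subset _ _)))
    refine ⟨insert x T₂, (card_insert_le _ _).trans (Nat.succ_le_succ hT₂card), ?_⟩
    have key : (U.filter fun a => ∀ y ∈ insert x T₂, y ∉ S a)
        = U₂.filter fun a => ∀ y ∈ T₂, y ∉ S a := by
      rw [hU₂, Finset.filter_filter]
      apply Finset.filter_congr
      intro a _
      simp only [Finset.mem_insert]
      constructor
      · intro hall; exact ⟨hall x (Or.inl rfl), fun y hy => hall y (Or.inr hy)⟩
      · rintro ⟨h1, h2⟩ y (rfl | hy); exacts [h1, h2 y hy]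
    have hU₂card : (U₂.card : ℝ) ≤ (1 - ρ) * U.card := by
      have := Finset.card_filter_add_card_filter_not
        (s := U) (p := fun a => x ∈ S a)
      have hcast : ((U.filter fun a => x ∈ S a).card : ℝ) + (U₂.card : ℝ) = U.card := by
        rw [hU₂]
        exact_mod_cast congrArg (Nat.cast (R := ℝ)) this
      linarith
    have hpownn : (0:ℝ) ≤ (1 - ρ) ^ n := pow_nonneg (by linarith) n
    calc ((U.filter fun a => ∀ y ∈ insert x T₂, y ∉ S a).card : ℝ)
        = ((U₂.filter fun a => ∀ y ∈ T₂, y ∉ S a).card : ℝ) := by rw [key]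
      _ ≤ (1 - ρ) ^ n * U₂.card := hT₂
      _ ≤ (1 - ρ) ^ n * ((1 - ρ) * U.card) := mul_le_mul_of_nonneg_left hU₂card hpownn
      _ = (1 - ρ) ^ (n + 1) * U.card := by ring

private lemma cover_main (A₁ : Finset G) (S : G → Finset G) (ρ : ℝ) (hρ1 : ρ ≤ 1) (n : ℕ)
    (hhit : ∀ U' ⊆ A₁, U'.Nonempty → ∃ x : G,
      ρ * U'.card ≤ ((U'.filter fun a => x ∈ S a).card : ℝ)) :
    ∃ A' ⊆ A₁, (A₁.card : ℝ) - (1 - ρ) ^ n * A₁.card ≤ A'.card ∧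
      ∃ T : Finset G, T.card ≤ n ∧ ∀ a ∈ A', ∃ x ∈ T, x ∈ S a := by
  obtain ⟨T, hTn, hT⟩ := greedy_cover S ρ hρ1 n A₁ hhit
  refine ⟨A₁.filter (fun a => ∃ x ∈ T, x ∈ S a), filter_subset _ _, ?_, T, hTn,
    fun a ha => (mem_filter.1 ha).2⟩
  have hsplit := Finset.card_filter_add_card_filter_not
    (s := A₁) (p := fun a => ∃ x ∈ T, x ∈ S a)
  have hneg : (A₁.filter fun a => ¬ ∃ x ∈ T, x ∈ S a)
      = A₁.filter fun a => ∀ x ∈ T, x ∉ S a := by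
    apply Finset.filter_congr; intro a _; push_neg; rfl
  have hcast : ((A₁.filter fun a => ∃ x ∈ T, x ∈ S a).card : ℝ)
      + ((A₁.filter fun a => ∀ x ∈ T, x ∉ S a).card : ℝ) = A₁.card := by
    rw [← hneg]
    exact_mod_cast congrArg (Nat.cast (R := ℝ)) hsplit
  linarith

end aux

section grp

variable {G : Type*} [AddCommGroup G] [DecidableEq G]

private lemma inter_image_card_swap (a a' : G) (B : Finset G) :
    ((B.image fun b => a + b) ∩ (B.image fun b => a' + b)).card
      = ((B.image fun b => a' - b) ∩ (B.image fun b => a - b)).card := by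
  apply Finset.card_bij (fun x _ => a + a' - x)
  · intro x hx
    simp only [Finset.mem_inter, Finset.mem_image] at hx ⊢
    obtain ⟨⟨b, hb, rfl⟩, ⟨b', hb', he⟩⟩ := hx
    constructor
    · exact ⟨b, hb, by abel⟩
    · exact ⟨b', hb', by rw [← he]; abel⟩
  · intro x _ y _ h
    exact sub_right_inj.mp h
  · intro y hy
    simp only [Finset.mem_inter, Finset.mem_image] at hy ⊢
    obtain ⟨⟨b, hb, rfl⟩, ⟨b', hb', he⟩⟩ := hy
    refine ⟨a + a' - (a' - b), ⟨⟨b, hb, by abel⟩, ⟨b', hb', by rw [← he]; abel⟩⟩, by abel⟩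

private lemma hit_pos (B D : Finset G) (Γ : Finset (G × G))
    (hΓD : ∀ p ∈ Γ, p.1 - p.2 ∈ D)
    (hD0 : (0:ℝ) < D.card)
    (U' : Finset G)
    (hdeg : ∀ a ∈ U', (B.card : ℝ) / 2 ≤ ((B.filter fun b => (a, b) ∈ Γ).card : ℝ)) :
    ∃ x : G, (B.card : ℝ) / (4 * D.card) * U'.card
      ≤ ((U'.filter fun a =>
            x ∈ (B.filter fun b => (a, b) ∈ Γ).image fun b => a - b).card : ℝ) := by
  classical
  set Bg : G → Finset G := fun a => B.filter fun b => (a, b) ∈ Γ with hBg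
  set Sp : G → Finset G := fun a => (Bg a).image fun b => a - b with hSp
  have hSpD : ∀ a ∈ U', Sp a ⊆ D := by
    intro a _ x hx
    obtain ⟨b, hb, rfl⟩ := Finset.mem_image.1 hx
    exact hΓD (a, b) (Finset.mem_filter.1 hb).2
  have h2 : ∑ x ∈ D, (U'.filter fun a => x ∈ Sp a).card = ∑ a ∈ U', (Sp a).card :=
    sum_count U' Sp D hSpD
  have hSpcard : ∀ a : G, (Sp a).card = (Bg a).card := fun a =>
    Finset.card_image_of_injective _ (fun b b' h => sub_right_inj.mp h)
  have hDne : D.Nonempty := Finset.card_pos.1 (by exact_mod_cast hD0)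
  obtain ⟨x₀, hx₀D, hmax⟩ := Finset.exists_max_image D
    (fun x => (U'.filter fun a => x ∈ Sp a).card) hDne
  have hsum_le : ∑ x ∈ D, (U'.filter fun a => x ∈ Sp a).card
      ≤ D.card * (U'.filter fun a => x₀ ∈ Sp a).card := by
    calc ∑ x ∈ D, (U'.filter fun a => x ∈ Sp a).card
        ≤ ∑ _x ∈ D, (U'.filter fun a => x₀ ∈ Sp a).card :=
          Finset.sum_le_sum fun x hx => hmax x hx
      _ = D.card * (U'.filter fun a => x₀ ∈ Sp a).card := by
          rw [Finset.sum_const, smul_eq_mul]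
  have hlow : (B.card : ℝ)/2 * U'.card ≤ ∑ a ∈ U', ((Sp a).card : ℝ) := by
    have hterm : ∀ a ∈ U', (B.card:ℝ)/2 ≤ ((Sp a).card : ℝ) := by
      intro a ha; rw [hSpcard a]; exact hdeg a ha
    calc (B.card:ℝ)/2 * U'.card = ∑ _a ∈ U', (B.card:ℝ)/2 := by
          rw [Finset.sum_const, nsmul_eq_mul]; ring
      _ ≤ _ := Finset.sum_le_sum hterm
  have hNat : ∑ a ∈ U', (Sp a).card ≤ D.card * (U'.filter fun a => x₀ ∈ Sp a).card :=
    h2.symm.le.trans hsum_le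
  have hR : (∑ a ∈ U', ((Sp a).card : ℝ))
      ≤ (D.card : ℝ) * ((U'.filter fun a => x₀ ∈ Sp a).card : ℝ) := by
    exact_mod_cast hNat
  refine ⟨x₀, ?_⟩
  have hcnt0 : (0:ℝ) ≤ ((U'.filter fun a => x₀ ∈ Sp a).card : ℝ) := Nat.cast_nonneg _
  rw [div_mul_eq_mul_div, div_le_iff₀ (by linarith)]
  nlinarith [hlow.trans hR]

private lemma hit_neg (B D : Finset G) (Γ : Finset (G × G))
    (hΓD : ∀ p ∈ Γ, p.1 - p.2 ∈ D)
    (hB0 : (0:ℝ) < B.card) (hD0 : (0:ℝ) < D.card)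
    (U' : Finset G)
    (hdeg : ∀ a ∈ U', (B.card : ℝ) / 2 ≤ ((B.filter fun b => (a, b) ∈ Γ).card : ℝ))
    (hne : U'.Nonempty) :
    ∃ x : G, (B.card : ℝ) / (4 * D.card) * U'.card
      ≤ ((U'.filter fun a => x ∈ B.image fun b => a + b).card : ℝ) := by
  classical
  set Bg : G → Finset G := fun a => B.filter fun b => (a, b) ∈ Γ with hBg
  set Sp : G → Finset G := fun a => (Bg a).image fun b => a - b with hSp
  set Sm : G → Finset G := fun a => B.image fun b => a + b with hSm
  set Y : Finset G := U'.biUnion Sm with hY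
  have hSmY : ∀ a ∈ U', Sm a ⊆ Y := fun a ha => Finset.subset_biUnion_of_mem _ ha
  have hSpD : ∀ a ∈ U', Sp a ⊆ D := by
    intro a _ x hx
    obtain ⟨b, hb, rfl⟩ := Finset.mem_image.1 hx
    exact hΓD (a, b) (Finset.mem_filter.1 hb).2
  have hSpcard : ∀ a : G, (Sp a).card = (Bg a).card := fun a =>
    Finset.card_image_of_injective _ (fun b b' h => sub_right_inj.mp h)
  -- first moment for Sm
  have hcsum : ∑ x ∈ Y, (U'.filter fun a => x ∈ Sm a).card = U'.card * B.card := by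
    rw [sum_count U' Sm Y hSmY]
    rw [Finset.sum_congr rfl
      (fun a _ => Finset.card_image_of_injective B (add_right_injective a)),
      Finset.sum_const, smul_eq_mul]
  -- second moment comparison
  have hsq : ∑ x ∈ D, ((U'.filter fun a => x ∈ Sp a).card) ^ 2
      ≤ ∑ x ∈ Y, ((U'.filter fun a => x ∈ Sm a).card) ^ 2 := by
    rw [sum_count_sq U' Sp D hSpD, sum_count_sq U' Sm Y hSmY]
    refine Finset.sum_le_sum fun a _ => Finset.sum_le_sum fun a' _ => ?_
    calc (Sp a ∩ Sp a').card
        ≤ ((B.image fun b => a - b) ∩ (B.image fun b => a' - b)).card := by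
          apply Finset.card_le_card
          exact Finset.inter_subset_inter
            (Finset.image_subset_image (Finset.filter_subset _ _))
            (Finset.image_subset_image (Finset.filter_subset _ _))
      _ = ((B.image fun b => a' + b) ∩ (B.image fun b => a + b)).card :=
          (inter_image_card_swap a' a B).symm
      _ = (Sm a ∩ Sm a').card := by rw [Finset.inter_comm]
  -- Cauchy-Schwarz
  have hCS : (∑ x ∈ D, ((U'.filter fun a => x ∈ Sp a).card : ℝ)) ^ 2
      ≤ (D.card : ℝ) * ∑ x ∈ D, ((U'.filter fun a => x ∈ Sp a).card : ℝ) ^ 2 :=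
    sq_sum_le_card_mul_sum_sq
  -- lower bound on Σ d
  have h2 : ∑ x ∈ D, (U'.filter fun a => x ∈ Sp a).card = ∑ a ∈ U', (Sp a).card :=
    sum_count U' Sp D hSpD
  have hlow : (B.card : ℝ)/2 * U'.card ≤ ∑ x ∈ D, ((U'.filter fun a => x ∈ Sp a).card : ℝ) := by
    have hterm : ∀ a ∈ U', (B.card:ℝ)/2 ≤ ((Sp a).card : ℝ) := by
      intro a ha; rw [hSpcard a]; exact hdeg a ha
    have : (B.card:ℝ)/2 * U'.card ≤ ∑ a ∈ U', ((Sp a).card : ℝ) := by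
      calc (B.card:ℝ)/2 * U'.card = ∑ _a ∈ U', (B.card:ℝ)/2 := by
            rw [Finset.sum_const, nsmul_eq_mul]; ring
        _ ≤ _ := Finset.sum_le_sum hterm
    refine this.trans ?_
    exact_mod_cast h2.symm.le
  -- maximizer over Y
  have hYne : Y.Nonempty := by
    obtain ⟨a, ha⟩ := hne
    have hBne : B.Nonempty := Finset.card_pos.1 (by exact_mod_cast hB0)
    obtain ⟨b, hb⟩ := hBne
    exact ⟨a + b, hSmY a ha (Finset.mem_image_of_mem _ hb)⟩
  obtain ⟨x₀, hx₀Y, hmax⟩ := Finset.exists_max_image Y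
    (fun x => (U'.filter fun a => x ∈ Sm a).card) hYne
  have hup : ∑ x ∈ Y, ((U'.filter fun a => x ∈ Sm a).card) ^ 2
      ≤ (U'.filter fun a => x₀ ∈ Sm a).card * (U'.card * B.card) := by
    calc ∑ x ∈ Y, ((U'.filter fun a => x ∈ Sm a).card) ^ 2
        ≤ ∑ x ∈ Y, (U'.filter fun a => x₀ ∈ Sm a).card
            * (U'.filter fun a => x ∈ Sm a).card := by
          refine Finset.sum_le_sum fun x hx => ?_
          rw [sq]
          exact Nat.mul_le_mul_right _ (hmax x hx)
      _ = (U'.filter fun a => x₀ ∈ Sm a).card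
            * ∑ x ∈ Y, (U'.filter fun a => x ∈ Sm a).card := by rw [Finset.mul_sum]
      _ = _ := by rw [hcsum]
  -- assemble in ℝ
  refine ⟨x₀, ?_⟩
  have hcm0 : (0:ℝ) ≤ ((U'.filter fun a => x₀ ∈ Sm a).card : ℝ) := Nat.cast_nonneg _
  have hu0 : (0:ℝ) < U'.card := by exact_mod_cast Finset.card_pos.2 hne
  have hsq' : (∑ x ∈ D, ((U'.filter fun a => x ∈ Sp a).card : ℝ) ^ 2)
      ≤ ∑ x ∈ Y, ((U'.filter fun a => x ∈ Sm a).card : ℝ) ^ 2 := by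
    exact_mod_cast hsq
  have hup' : (∑ x ∈ Y, ((U'.filter fun a => x ∈ Sm a).card : ℝ) ^ 2)
      ≤ ((U'.filter fun a => x₀ ∈ Sm a).card : ℝ) * ((U'.card : ℝ) * B.card) := by
    exact_mod_cast hup
  have hkey : ((B.card:ℝ)/2 * U'.card) ^ 2 ≤ (D.card : ℝ) * (((U'.filter fun a => x₀ ∈ Sm a).card : ℝ) * ((U'.card:ℝ) * B.card)) := by
    calc ((B.card:ℝ)/2 * U'.card) ^ 2
        ≤ (∑ x ∈ D, ((U'.filter fun a => x ∈ Sp a).card : ℝ)) ^ 2 := by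
          apply pow_le_pow_left₀ (by positivity) hlow
      _ ≤ (D.card : ℝ) * ∑ x ∈ D, ((U'.filter fun a => x ∈ Sp a).card : ℝ) ^ 2 := hCS
      _ ≤ (D.card : ℝ) * ∑ x ∈ Y, ((U'.filter fun a => x ∈ Sm a).card : ℝ) ^ 2 :=
          mul_le_mul_of_nonneg_left hsq' hD0.le
      _ ≤ _ := mul_le_mul_of_nonneg_left hup' hD0.le
  rw [div_mul_eq_mul_div, div_le_iff₀ (by linarith)]
  nlinarith [hkey, mul_pos hB0 hu0, mul_nonneg (mul_nonneg hD0.le hcm0) (mul_pos hB0 hu0).le]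

end grp

set_option maxHeartbeats 1000000 in
theorem stmt15 :
    ∀ ε : ℝ, 0 < ε → ε < 1 / 4 → ∃ C : ℝ, 0 < C ∧
      ∀ (G : Type) [AddCommGroup G] [DecidableEq G],
        ∀ A B : Finset G, A.Nonempty → B.Nonempty →
          ∀ Γ : Finset (G × G), Γ ⊆ A ×ˢ B →
            (1 - ε) * (A.card : ℝ) * (B.card : ℝ) ≤ (Γ.card : ℝ) →
            (∃ A' ⊆ A, (1 - 2 * Real.sqrt ε) * (A.card : ℝ) ≤ (A'.card : ℝ) ∧
              ∃ T : Finset G,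
                (T.card : ℝ) ≤ C * ((Γ.image fun x => x.1 - x.2).card : ℝ) / (B.card : ℝ) ∧
                A' ⊆ T + B) ∧
            (∃ A'' ⊆ A, (1 - 2 * Real.sqrt ε) * (A.card : ℝ) ≤ (A''.card : ℝ) ∧
              ∃ T' : Finset G,
                (T'.card : ℝ) ≤ C * ((Γ.image fun x => x.1 - x.2).card : ℝ) / (B.card : ℝ) ∧
                A'' ⊆ T' + -B) := by
  intro ε hε hε4
  classical
  have hs0 : 0 < Real.sqrt ε := Real.sqrt_pos.2 hε
  set s : ℝ := Real.sqrt ε with hsdef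
  have hss : s * s = ε := Real.mul_self_sqrt hε.le
  have hs2 : s < 1/2 := by nlinarith
  set L : ℝ := Real.log (1/s) with hLdef
  have hL0 : 0 < L := Real.log_pos (by rw [lt_div_iff₀ hs0]; linarith)
  refine ⟨4 * L + 2, by linarith, ?_⟩
  intro G _ _ A B hA hB Γ hΓAB hΓcard
  have hA0 : (0:ℝ) < A.card := by exact_mod_cast Finset.card_pos.2 hA
  have hB0 : (0:ℝ) < B.card := by exact_mod_cast Finset.card_pos.2 hB
  set D : Finset G := Γ.image fun x => x.1 - x.2 with hDdef
  have hΓD : ∀ p ∈ Γ, p.1 - p.2 ∈ D := fun p hp => Finset.mem_image_of_mem _ hp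
  set Bg : G → Finset G := fun a => B.filter fun b => (a, b) ∈ Γ with hBgdef
  set A₁ : Finset G := A.filter fun a => (1 - s) * B.card ≤ ((Bg a).card : ℝ) with hA₁def
  have hA₁A : A₁ ⊆ A := Finset.filter_subset _ _
  -- edge count
  have hedge : Γ.card = ∑ a ∈ A, (Bg a).card := by
    rw [Finset.card_eq_sum_card_fiberwise
      (f := Prod.fst) (t := A) (fun p hp => (Finset.mem_product.1 (hΓAB hp)).1)]
    refine Finset.sum_congr rfl fun a _ => ?_
    apply Finset.card_bij (fun p _ => p.2)
    · intro p hp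
      rw [Finset.mem_filter] at hp
      rw [hBgdef, Finset.mem_filter]
      refine ⟨(Finset.mem_product.1 (hΓAB hp.1)).2, ?_⟩
      have hpe : (a, p.2) = p := Prod.ext hp.2.symm rfl
      rw [hpe]; exact hp.1
    · intro p hp q hq h
      have hp2 := (Finset.mem_filter.1 hp).2
      have hq2 := (Finset.mem_filter.1 hq).2
      exact Prod.ext (hp2.trans hq2.symm) h
    · intro b hb
      rw [hBgdef, Finset.mem_filter] at hb
      exact ⟨(a, b), Finset.mem_filter.2 ⟨hb.2, rfl⟩, rfl⟩
  -- A₁ is large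
  have hsplitA := Finset.card_filter_add_card_filter_not
    (s := A) (p := fun a => (1 - s) * B.card ≤ ((Bg a).card : ℝ))
  have hcompl : ((A.filter fun a => ¬ ((1 - s) * B.card ≤ ((Bg a).card : ℝ))).card : ℝ)
      = (A.card : ℝ) - A₁.card := by
    have := congrArg (Nat.cast (R := ℝ)) hsplitA
    push_cast at this
    rw [hA₁def]
    linarith
  have hup : (Γ.card : ℝ) ≤ (A₁.card : ℝ) * B.card
      + ((A.card : ℝ) - A₁.card) * ((1 - s) * B.card) := by
    have e1 : (Γ.card : ℝ) = ∑ a ∈ A, ((Bg a).card : ℝ) := by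
      rw [hedge]; push_cast; rfl
    have e2 : (∑ a ∈ A, ((Bg a).card : ℝ))
        = ∑ a ∈ A₁, ((Bg a).card : ℝ)
          + ∑ a ∈ A.filter (fun a => ¬ ((1 - s) * B.card ≤ ((Bg a).card : ℝ))),
            ((Bg a).card : ℝ) := by
      rw [hA₁def]
      exact (Finset.sum_filter_add_sum_filter_not A _ _).symm
    have e3 : ∑ a ∈ A₁, ((Bg a).card : ℝ) ≤ (A₁.card : ℝ) * B.card := by
      calc ∑ a ∈ A₁, ((Bg a).card : ℝ) ≤ ∑ _a ∈ A₁, (B.card : ℝ) :=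
            Finset.sum_le_sum fun a _ => by
              exact_mod_cast Finset.card_le_card (Finset.filter_subset _ _)
        _ = (A₁.card : ℝ) * B.card := by rw [Finset.sum_const, nsmul_eq_mul]
    have e4 : ∑ a ∈ A.filter (fun a => ¬ ((1 - s) * B.card ≤ ((Bg a).card : ℝ))),
        ((Bg a).card : ℝ)
        ≤ ((A.card : ℝ) - A₁.card) * ((1 - s) * B.card) := by
      calc ∑ a ∈ A.filter (fun a => ¬ ((1 - s) * B.card ≤ ((Bg a).card : ℝ))),
            ((Bg a).card : ℝ)
          ≤ ∑ _a ∈ A.filter (fun a => ¬ ((1 - s) * B.card ≤ ((Bg a).card : ℝ))),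
            (1 - s) * (B.card : ℝ) :=
            Finset.sum_le_sum fun a ha => (not_le.1 (Finset.mem_filter.1 ha).2).le
        _ = _ := by rw [Finset.sum_const, nsmul_eq_mul, hcompl]
    linarith [e1, e2, e3, e4]
  have hA₁card : (1 - s) * A.card ≤ (A₁.card : ℝ) := by
    have hΓ2 : (1 - s*s) * A.card * B.card ≤ (Γ.card : ℝ) := by rw [hss]; exact hΓcard
    nlinarith [hΓ2, hup, mul_pos hs0 hB0, hB0, hs0]
  have hA₁ne : A₁.Nonempty := by
    rw [← Finset.card_pos]
    have : (0:ℝ) < A₁.card := lt_of_lt_of_le (by nlinarith) hA₁card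
    exact_mod_cast this
  have hdegA₁ : ∀ a ∈ A₁, (B.card : ℝ)/2 ≤ ((Bg a).card : ℝ) := by
    intro a ha
    have := (Finset.mem_filter.1 ha).2
    nlinarith
  have hDB : (B.card : ℝ)/2 ≤ (D.card : ℝ) := by
    obtain ⟨a₀, ha₀⟩ := hA₁ne
    have hsub : (Bg a₀).image (fun b => a₀ - b) ⊆ D := by
      intro x hx
      obtain ⟨b, hb, rfl⟩ := Finset.mem_image.1 hx
      exact hΓD (a₀, b) (Finset.mem_filter.1 hb).2
    have hc : (Bg a₀).card ≤ D.card := by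
      rw [← Finset.card_image_of_injective (Bg a₀) (fun b b' h => sub_right_inj.mp h)]
      exact Finset.card_le_card hsub
    calc (B.card:ℝ)/2 ≤ ((Bg a₀).card : ℝ) := hdegA₁ a₀ ha₀
      _ ≤ (D.card : ℝ) := by exact_mod_cast hc
  have hD0 : (0:ℝ) < D.card := lt_of_lt_of_le (by linarith) hDB
  set ρ : ℝ := B.card / (4 * D.card) with hρdef
  have hρ0 : 0 < ρ := div_pos hB0 (by linarith)
  have hρ1 : ρ ≤ 1 := by rw [div_le_one (by linarith)]; linarith
  set n : ℕ := ⌈L / ρ⌉₊ with hndef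
  have hnle : (n : ℝ) ≤ (4 * L + 2) * (D.card : ℝ) / B.card := by
    have h1 : (n:ℝ) < L/ρ + 1 := Nat.ceil_lt_add_one (by positivity)
    have h2 : L/ρ = 4*L*(D.card:ℝ)/B.card := by
      rw [hρdef]; field_simp
    have h3 : (1:ℝ) ≤ 2*(D.card:ℝ)/B.card := by
      rw [le_div_iff₀ hB0]; linarith
    have h4 : (4*L+2)*(D.card:ℝ)/B.card = 4*L*(D.card:ℝ)/B.card + 2*(D.card:ℝ)/B.card := by
      ring
    linarith
  have hpow : (1-ρ)^n * (A₁.card : ℝ) ≤ s * A.card := by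
    have e0 : (0:ℝ) ≤ 1 - ρ := by linarith
    have e1 : (1-ρ)^n ≤ Real.exp (-ρ) ^ n :=
      pow_le_pow_left₀ e0 (by linarith [Real.add_one_le_exp (-ρ)]) n
    have e2 : Real.exp (-ρ) ^ n = Real.exp ((n:ℝ) * (-ρ)) := (Real.exp_nat_mul _ n).symm
    have e3 : (n:ℝ) * (-ρ) ≤ Real.log s := by
      have hceil : L / ρ ≤ (n:ℝ) := Nat.le_ceil _
      have h5 : L ≤ (n:ℝ) * ρ := (div_le_iff₀ hρ0).mp hceil
      have h6 : Real.log s = -L := by rw [hLdef, one_div, Real.log_inv]; ring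
      rw [h6]; nlinarith
    have e4 : Real.exp ((n:ℝ) * (-ρ)) ≤ s :=
      (Real.exp_le_exp.2 e3).trans_eq (Real.exp_log hs0)
    have e5 : (1-ρ)^n ≤ s := by rw [e2] at e1; exact e1.trans e4
    have e6 : (A₁.card : ℝ) ≤ A.card := by exact_mod_cast Finset.card_le_card hA₁A
    exact mul_le_mul e5 e6 (Nat.cast_nonneg _) hs0.le
  constructor
  · -- covering by translates of B
    obtain ⟨A', hA'sub, hA'card, T, hTn, hTcov⟩ :=
      cover_main A₁ (fun a => (Bg a).image fun b => a - b) ρ hρ1 n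
        (fun U' hU' hUne => hit_pos B D Γ hΓD hD0 U' (fun a ha => hdegA₁ a (hU' ha)))
    refine ⟨A', hA'sub.trans hA₁A, ?_, T, ?_, ?_⟩
    · linarith [hA'card, hA₁card, hpow]
    · have hTn' : (T.card : ℝ) ≤ n := by exact_mod_cast hTn
      linarith [hnle]
    · intro a ha
      obtain ⟨x, hxT, hxS⟩ := hTcov a ha
      obtain ⟨b, hb, hba⟩ := Finset.mem_image.1 hxS
      refine Finset.mem_add.2 ⟨x, hxT, b, Finset.filter_subset _ _ hb, ?_⟩
      rw [← hba]; abel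
  · -- covering by translates of -B
    obtain ⟨A'', hA''sub, hA''card, T', hT'n, hT'cov⟩ :=
      cover_main A₁ (fun a => B.image fun b => a + b) ρ hρ1 n
        (fun U' hU' hUne => hit_neg B D Γ hΓD hB0 hD0 U'
          (fun a ha => hdegA₁ a (hU' ha)) hUne)
    refine ⟨A'', hA''sub.trans hA₁A, ?_, T', ?_, ?_⟩
    · linarith [hA''card, hA₁card, hpow]
    · have hTn' : (T'.card : ℝ) ≤ n := by exact_mod_cast hT'n
      linarith [hnle]
    · intro a ha
      obtain ⟨x, hxT, hxS⟩ := hT'cov a ha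
      obtain ⟨b, hb, hba⟩ := Finset.mem_image.1 hxS
      refine Finset.mem_add.2 ⟨x, hxT, -b, Finset.neg_mem_neg hb, ?_⟩
      rw [← hba]; abel
end

section
/- For every natural number k ≥ 1 there exists a constant c > 0 depending only on k such that for every prime power q and every finite separable set A ⊆ F_q(t), the k-fold iterated sumset satisfies |kA| ≥ c·|A|^k. -/
open scoped Pointwise

open scoped Classical in
/-- The non-archimedean norm on `F_q(t)`: `|x| = q ^ deg x` for `x ≠ 0`, and `|0| = 0`. -/
noncomputable def ffNorm {F : Type*} [Field F] [Fintype F] (x : RatFunc F) : ℝ :=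
  if x = 0 then 0 else (Fintype.card F : ℝ) ^ x.intDegree

/-- A ball in `F_q(t)` with centre `x` and radius `r`. -/
def ffBall {F : Type*} [Field F] [Fintype F] (x : RatFunc F) (r : ℝ) : Set (RatFunc F) :=
  {y | ffNorm (x - y) ≤ r}

/-- A finite set `A ⊆ F_q(t)` is separable if its elements can be enumerated
`a₁, …, a_n` so that for each `j` there is a ball whose intersection with `A`
is exactly `{a₁, …, a_j}`. -/
def SeparableSet {F : Type*} [Field F] [Fintype F] (A : Set (RatFunc F)) : Prop :=
  ∃ (n : ℕ) (a : Fin n → RatFunc F), Function.Injective a ∧ A = Set.range a ∧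
    ∀ j : Fin n, ∃ (x : RatFunc F) (r : ℝ), A ∩ ffBall x r = a '' {i | i ≤ j}

/-- `iterSumset A n` is the `(n+1)`-fold iterated sumset `A + A + ⋯ + A`. -/
def iterSumset {α : Type*} [Add α] (A : Set α) : ℕ → Set α
  | 0 => A
  | n + 1 => iterSumset A n + A

section
variable {F : Type*} [Field F] [Fintype F]

lemma one_lt_q : (1 : ℝ) < (Fintype.card F : ℝ) := by
  exact_mod_cast Fintype.one_lt_card

lemma ffNorm_zero : ffNorm (0 : RatFunc F) = 0 := by simp [ffNorm]

lemma ffNorm_nonneg (x : RatFunc F) : 0 ≤ ffNorm x := by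
  unfold ffNorm
  split
  · exact le_refl _
  · exact (zpow_pos (by linarith [one_lt_q (F := F)]) _).le

lemma ffNorm_pos {x : RatFunc F} (hx : x ≠ 0) : 0 < ffNorm x := by
  unfold ffNorm
  rw [if_neg hx]
  exact zpow_pos (by linarith [one_lt_q (F := F)]) _

lemma ffNorm_neg (x : RatFunc F) : ffNorm (-x) = ffNorm x := by
  unfold ffNorm
  by_cases hx : x = 0 <;> simp [hx, RatFunc.intDegree_neg]

lemma ffNorm_add_le (x y : RatFunc F) : ffNorm (x + y) ≤ max (ffNorm x) (ffNorm y) := by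
  by_cases hx : x = 0
  · simp [hx]
  by_cases hy : y = 0
  · simp [hy]
  by_cases hxy : x + y = 0
  · rw [hxy, ffNorm_zero]
    exact le_max_of_le_left (ffNorm_nonneg x)
  have hmono : Monotone fun z : ℤ => (Fintype.card F : ℝ) ^ z :=
    fun _ _ h => zpow_le_zpow_right₀ (one_lt_q (F := F)).le h
  unfold ffNorm
  rw [if_neg hx, if_neg hy, if_neg hxy, ← hmono.map_max]
  exact hmono (RatFunc.intDegree_add_le hy hxy)

lemma ffNorm_add_eq_left {x y : RatFunc F} (h : ffNorm y < ffNorm x) :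
    ffNorm (x + y) = ffNorm x := by
  have h1 : ffNorm (x + y) ≤ ffNorm x := (ffNorm_add_le x y).trans_eq (max_eq_left h.le)
  have h2 : ffNorm x ≤ max (ffNorm (x + y)) (ffNorm y) := by
    have := ffNorm_add_le (x + y) (-y)
    simpa [ffNorm_neg] using this
  rcases le_max_iff.mp h2 with h3 | h3
  · exact le_antisymm h1 h3
  · linarith

end

section
variable {F : Type*} [Field F] [Fintype F]

lemma ffNorm_sum_lt {ι : Type*} (U : Finset ι) (c : ι → RatFunc F) {r : ℝ} (hr : 0 < r)
    (h : ∀ u ∈ U, ffNorm (c u) < r) : ffNorm (∑ u ∈ U, c u) < r := by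
  classical
  induction U using Finset.induction with
  | empty => simpa [ffNorm_zero] using hr
  | @insert a s ha ih =>
    rw [Finset.sum_insert ha]
    refine (ffNorm_add_le _ _).trans_lt (max_lt (h a (Finset.mem_insert_self a s)) ?_)
    exact ih (fun u hu => h u (Finset.mem_insert_of_mem hu))

lemma ffNorm_sum_ne_zero {n : ℕ} (c : Fin n → RatFunc F) (d : Fin n → ℝ)
    (hd : StrictMono d) (hc : ∀ u, ffNorm (c u) = d u)
    (U : Finset (Fin n)) (hU : U.Nonempty) (hpos : ∀ u ∈ U, 0 < d u) :
    ∑ u ∈ U, c u ≠ 0 := by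
  classical
  set m := U.max' hU with hm
  have hmU : m ∈ U := U.max'_mem hU
  have hrest : ffNorm (∑ u ∈ U.erase m, c u) < d m := by
    refine ffNorm_sum_lt _ _ (hpos m hmU) ?_
    intro u hu
    rw [hc u]
    exact hd (lt_of_le_of_ne (U.le_max' u (Finset.mem_of_mem_erase hu))
      (Finset.ne_of_mem_erase hu))
  have hsum : ∑ u ∈ U, c u = c m + ∑ u ∈ U.erase m, c u :=
    (Finset.add_sum_erase U c hmU).symm
  rw [hsum]
  have : ffNorm (c m + ∑ u ∈ U.erase m, c u) = d m := by
    rw [ffNorm_add_eq_left (by rw [hc m]; exact hrest), hc m]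
  intro h0
  rw [h0, ffNorm_zero] at this
  exact absurd this.symm (ne_of_gt (hpos m hmU))

/-- Key injectivity: sums over distinct `k`-subsets are distinct. -/
lemma sums_injective {n : ℕ} (a : Fin (n + 1) → RatFunc F)
    (hd : StrictMono fun j : Fin (n + 1) => ffNorm (a j - a 0))
    {S T : Finset (Fin (n + 1))} (hcard : S.card = T.card)
    (hsum : ∑ i ∈ S, a i = ∑ i ∈ T, a i) : S = T := by
  classical
  set b : Fin (n + 1) → RatFunc F := fun j => a j - a 0 with hb
  have hb0 : b 0 = 0 := by simp [hb]
  have hbsum : ∑ i ∈ S, b i = ∑ i ∈ T, b i := by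
    simp only [hb, Finset.sum_sub_distrib, Finset.sum_const, hsum, hcard]
  set S' := S \ T with hS'
  set T' := T \ S with hT'
  have hdisj : Disjoint S' T' := disjoint_sdiff_sdiff
  have hsum' : ∑ i ∈ S', b i = ∑ i ∈ T', b i := by
    have h1 : ∑ i ∈ S ∩ T, b i + ∑ i ∈ S', b i = ∑ i ∈ S, b i :=
      Finset.sum_inter_add_sum_sdiff S T b
    have h2 : ∑ i ∈ T ∩ S, b i + ∑ i ∈ T', b i = ∑ i ∈ T, b i :=
      Finset.sum_inter_add_sum_sdiff T S b
    rw [Finset.inter_comm] at h2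
    have := h1.trans (hbsum.trans h2.symm)
    exact add_left_cancel this
  set c : Fin (n + 1) → RatFunc F := fun u => if u ∈ S' then b u else -b u with hcdef
  set U := (S' ∪ T').erase 0 with hUdef
  have hcU : ∑ u ∈ U, c u = 0 := by
    have hU0 : ∑ u ∈ (S' ∪ T'), c u = ∑ u ∈ U, c u + (if (0 : Fin (n+1)) ∈ S' ∪ T' then c 0 else 0) := by
      by_cases h0 : (0 : Fin (n + 1)) ∈ S' ∪ T'
      · rw [if_pos h0, ← Finset.add_sum_erase _ c h0, add_comm]
      · rw [if_neg h0, add_zero, hUdef, Finset.erase_eq_of_notMem h0]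
    have hc0 : c 0 = 0 := by
      simp only [hcdef]
      split <;> simp [hb0]
    have hsplit : ∑ u ∈ (S' ∪ T'), c u = ∑ u ∈ S', b u - ∑ u ∈ T', b u := by
      rw [Finset.sum_union hdisj]
      have e1 : ∑ u ∈ S', c u = ∑ u ∈ S', b u :=
        Finset.sum_congr rfl fun u hu => by simp [hcdef, hu]
      have e2 : ∑ u ∈ T', c u = -∑ u ∈ T', b u := by
        rw [← Finset.sum_neg_distrib]
        refine Finset.sum_congr rfl fun u hu => ?_
        have : u ∉ S' := Finset.disjoint_right.mp hdisj hu
        simp [hcdef, this]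
      rw [e1, e2, sub_eq_add_neg]
    have : ∑ u ∈ (S' ∪ T'), c u = 0 := by rw [hsplit, hsum', sub_self]
    rw [hU0, hc0] at this
    simpa using this
  have hUempty : U = ∅ := by
    by_contra hne
    have hUne : U.Nonempty := Finset.nonempty_of_ne_empty hne
    refine ffNorm_sum_ne_zero c (fun j => ffNorm (b j)) hd ?_ U hUne ?_ hcU
    · intro u
      simp only [hcdef]
      split
      · rfl
      · exact ffNorm_neg _
    · intro u hu
      have hu0 : u ≠ 0 := Finset.ne_of_mem_erase hu
      have : (0 : Fin (n + 1)) < u := Fin.pos_of_ne_zero hu0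
      have := hd this
      simpa [hb0, ffNorm_zero] using this
  have hsub : S' ∪ T' ⊆ {0} := by
    intro u hu
    by_contra h0
    have : u ∈ U := Finset.mem_erase.mpr ⟨by simpa using h0, hu⟩
    simp [hUempty] at this
  have hcard' : S'.card = T'.card := by
    have h1 : (S ∩ T).card + S'.card = S.card := by
      rw [← Finset.card_union_of_disjoint (Finset.disjoint_sdiff_inter S T).symm]
      congr 1
      rw [Finset.union_comm]
      exact (Finset.sdiff_union_inter S T)
    have h2 : (T ∩ S).card + T'.card = T.card := by
      rw [← Finset.card_union_of_disjoint (Finset.disjoint_sdiff_inter T S).symm]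
      congr 1
      rw [Finset.union_comm]
      exact (Finset.sdiff_union_inter T S)
    rw [Finset.inter_comm] at h2
    omega
  have hS'e : S' = ∅ ∧ T' = ∅ := by
    have hs1 : S' ⊆ {0} := (Finset.subset_union_left).trans hsub
    have hs2 : T' ⊆ {0} := (Finset.subset_union_right).trans hsub
    have c1 : S'.card ≤ 1 := (Finset.card_le_card hs1).trans (by simp)
    interval_cases h : S'.card
    · constructor
      · exact Finset.card_eq_zero.mp h
      · exact Finset.card_eq_zero.mp (by omega)
    · exfalso
      have e1 : S' = {0} := Finset.eq_of_subset_of_card_le hs1 (by simp [h])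
      have e2 : T' = {0} := Finset.eq_of_subset_of_card_le hs2 (by simp [← hcard', h])
      have := hdisj
      rw [e1, e2] at this
      simp at this
  have h1 : S ⊆ T := by
    rw [← Finset.sdiff_eq_empty_iff_subset]
    exact hS'e.1
  have h2 : T ⊆ S := by
    rw [← Finset.sdiff_eq_empty_iff_subset]
    exact hS'e.2
  exact Finset.Subset.antisymm h1 h2

end

section
variable {F : Type*} [Field F] [Fintype F]

lemma sep_strictMono {n : ℕ} (a : Fin (n + 1) → RatFunc F) (hinj : Function.Injective a)
    (hballs : ∀ j, ∃ x r, Set.range a ∩ ffBall x r = a '' {i | i ≤ j}) :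
    StrictMono fun j : Fin (n + 1) => ffNorm (a j - a 0) := by
  intro j m hjm
  obtain ⟨x, r, hxr⟩ := hballs j
  have hj_mem : a j ∈ Set.range a ∩ ffBall x r := by
    rw [hxr]; exact ⟨j, le_refl j, rfl⟩
  have h0_mem : a 0 ∈ Set.range a ∩ ffBall x r := by
    rw [hxr]; exact ⟨0, Fin.zero_le j, rfl⟩
  have hj : ffNorm (x - a j) ≤ r := hj_mem.2
  have h0 : ffNorm (x - a 0) ≤ r := h0_mem.2
  have hm : ¬ ffNorm (x - a m) ≤ r := by
    intro hmem
    have : a m ∈ a '' {i | i ≤ j} := by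
      rw [← hxr]; exact ⟨⟨m, rfl⟩, hmem⟩
    obtain ⟨i, hi, hia⟩ := this
    have := hinj hia
    subst this
    exact absurd hjm (not_lt.mpr hi)
  push_neg at hm
  have hle : ffNorm (a j - a 0) ≤ r := by
    have e : a j - a 0 = (x - a 0) + -(x - a j) := by ring
    rw [e]
    refine (ffNorm_add_le _ _).trans ?_
    rw [ffNorm_neg]
    exact max_le h0 hj
  have hgt : r < ffNorm (a m - a 0) := by
    have e2 : x - a m = (x - a 0) + (a 0 - a m) := by ring
    have := ffNorm_add_le (x - a 0) (a 0 - a m)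
    rw [← e2] at this
    have h3 : ffNorm (a 0 - a m) = ffNorm (a m - a 0) := by
      rw [show a 0 - a m = -(a m - a 0) by ring, ffNorm_neg]
    rcases lt_max_iff.mp (hm.trans_le this) with h4 | h4
    · linarith
    · rw [h3] at h4; exact h4
  exact lt_of_le_of_lt hle hgt

end

lemma iterSumset_finite {α : Type*} [Add α] {A : Set α} (hA : A.Finite) :
    ∀ m, (iterSumset A m).Finite
  | 0 => hA
  | m + 1 => (iterSumset_finite hA m).add hA

lemma iterSumset_empty {α : Type*} [Add α] : ∀ m, (iterSumset (∅ : Set α) m) = ∅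
  | 0 => rfl
  | m + 1 => by rw [iterSumset, iterSumset_empty m]; simp

lemma sum_mem_iterSumset {α : Type*} [AddCommMonoid α] {ι : Type*} [DecidableEq ι]
    {A : Set α} (a : ι → α) (ha : ∀ i, a i ∈ A) :
    ∀ (m : ℕ) (S : Finset ι), S.card = m + 1 → (∑ i ∈ S, a i) ∈ iterSumset A m
  | 0, S, hS => by
    obtain ⟨i, rfl⟩ := Finset.card_eq_one.mp hS
    rw [Finset.sum_singleton]
    exact ha i
  | m + 1, S, hS => by
    have hne : S.Nonempty := Finset.card_pos.mp (by omega)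
    obtain ⟨i, hi⟩ := hne
    have hcard : (S.erase i).card = m + 1 := by
      rw [Finset.card_erase_of_mem hi]; omega
    have := sum_mem_iterSumset a ha m (S.erase i) hcard
    have hsum : ∑ j ∈ S, a j = ∑ j ∈ S.erase i, a j + a i :=
      (Finset.sum_erase_add S a hi).symm
    rw [hsum]
    exact Set.add_mem_add this (ha i)

lemma key_nat_ineq {k n : ℕ} (hk : 1 ≤ k) (hkn : k ≤ n) : n ≤ k * (n + 1 - k) := by
  have h : k * (n + 1 - k) = k * (n - k) + k := by
    rw [show n + 1 - k = (n - k) + 1 from by omega]; ring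
  have h2 : n - k ≤ k * (n - k) := Nat.le_mul_of_pos_left _ hk
  omega

theorem stmt17 :
    ∀ k : ℕ, 1 ≤ k → ∃ c : ℝ, 0 < c ∧
      ∀ (F : Type) [Field F] [Fintype F],
        ∀ A : Set (RatFunc F), A.Finite → SeparableSet A →
          c * (A.ncard : ℝ) ^ k ≤ ((iterSumset A (k - 1)).ncard : ℝ) := by
  intro k hk
  have hkpos : (0:ℝ) < (k:ℝ) := by exact_mod_cast hk
  refine ⟨1 / ((k:ℝ)^k * (k.factorial : ℝ)), by positivity, ?_⟩
  intro F _ _ A hfin hsep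
  classical
  by_cases hA : A = ∅
  · subst hA
    rw [iterSumset_empty]
    simp [zero_pow (by omega : k ≠ 0)]
  obtain ⟨m, a, hinj, hrange, hballs⟩ := hsep
  have hAcard : A.ncard = m := by
    rw [hrange, show Set.range a = ↑(Finset.univ.image a) by simp,
      Set.ncard_coe_finset, Finset.card_image_of_injective _ hinj, Finset.card_univ,
      Fintype.card_fin]
  have hm : m ≠ 0 := by
    rintro rfl
    rw [Set.range_eq_empty a] at hrange
    exact hA hrange
  obtain ⟨n', rfl⟩ : ∃ j, m = j + 1 := ⟨m - 1, by omega⟩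
  have hd := sep_strictMono a hinj (by rw [← hrange]; exact hballs)
  have haA : ∀ i, a i ∈ A := fun i => hrange ▸ Set.mem_range_self i
  have hfinsum := iterSumset_finite hfin (k - 1)
  set T := ((Finset.univ : Finset (Fin (n' + 1))).powersetCard k).image
    (fun S => ∑ i ∈ S, a i) with hT
  have hTcard : T.card = (n' + 1).choose k := by
    rw [hT, Finset.card_image_of_injOn, Finset.card_powersetCard, Finset.card_univ,
      Fintype.card_fin]
    intro S hS T' hT' hsum
    have hS' : S.card = k := (Finset.mem_powersetCard.mp hS).2
    have hT'' : T'.card = k := (Finset.mem_powersetCard.mp hT').2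
    exact sums_injective a hd (hS'.trans hT''.symm) hsum
  have hsub : ↑T ⊆ iterSumset A (k - 1) := by
    intro y hy
    simp only [hT, Finset.coe_image, Set.mem_image, Finset.mem_coe,
      Finset.mem_powersetCard] at hy
    obtain ⟨S, ⟨-, hScard⟩, rfl⟩ := hy
    exact sum_mem_iterSumset a haA (k - 1) S (by omega)
  have hbig : (((n' + 1).choose k : ℕ) : ℝ) ≤ ((iterSumset A (k - 1)).ncard : ℝ) := by
    have := Set.ncard_le_ncard hsub hfinsum
    rw [Set.ncard_coe_finset, hTcard] at this
    exact_mod_cast this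
  rw [hAcard]
  by_cases hkn : k ≤ n' + 1
  · have hnat := key_nat_ineq hk hkn
    have h1 : ((n' + 1 : ℕ):ℝ)^k ≤ ((k:ℝ))^k * (((n' + 1 + 1 - k : ℕ)) : ℝ)^k := by
      rw [← mul_pow]
      apply pow_le_pow_left₀ (by positivity)
      exact_mod_cast hnat
    have hq : (((n' + 1 + 1 - k : ℕ) : ℝ))^k / (k.factorial : ℝ) ≤ (((n' + 1).choose k : ℕ) : ℝ) := by
      exact_mod_cast Nat.pow_le_choose (α := ℝ) k (n' + 1)
    calc (1 / ((k:ℝ)^k * (k.factorial : ℝ))) * ((n' + 1 : ℕ):ℝ)^k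
        ≤ (1 / ((k:ℝ)^k * (k.factorial : ℝ))) * ((k:ℝ)^k * (((n' + 1 + 1 - k : ℕ)) : ℝ)^k) :=
          mul_le_mul_of_nonneg_left h1 (by positivity)
      _ = (((n' + 1 + 1 - k : ℕ) : ℝ))^k / (k.factorial : ℝ) := by
          field_simp
      _ ≤ (((n' + 1).choose k : ℕ) : ℝ) := hq
      _ ≤ _ := hbig
  · push_neg at hkn
    have hone : (1:ℝ) ≤ ((iterSumset A (k - 1)).ncard : ℝ) := by
      have hmem : (∑ _i ∈ (Finset.univ : Finset (Fin k)), a 0) ∈ iterSumset A (k - 1) := by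
        refine sum_mem_iterSumset (fun _ => a 0) (fun _ => haA 0) (k - 1) Finset.univ ?_
        simp only [Finset.card_univ, Fintype.card_fin]
        omega
      have := (Set.ncard_pos hfinsum).mpr ⟨_, hmem⟩
      exact_mod_cast this
    have h2 : (1 / ((k:ℝ)^k * (k.factorial : ℝ))) * ((n' + 1 : ℕ):ℝ)^k ≤ 1 := by
      rw [div_mul_eq_mul_div, one_mul, div_le_one (by positivity)]
      have hfac : (1:ℝ) ≤ (k.factorial : ℝ) := by exact_mod_cast k.factorial_pos
      have hnk : ((n' + 1 : ℕ):ℝ)^k ≤ (k:ℝ)^k := by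
        apply pow_le_pow_left₀ (by positivity)
        exact_mod_cast hkn.le
      nlinarith [pow_pos hkpos k]
    push_cast at h2 ⊢
    linarith
end
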